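/- arXiv:1710.01888 — 2 statements merged into one kernel-verified Lean document; each statement's English description precedes it below -/
import Mathlib

section
/- For every integer s ≥ 0, the space (ℙ_s)² of ℝ²-valued polynomial vector fields of degree ≤ s decomposes as the direct sum of rot⊥(ℙ_{s+1}) := {(∂q/∂x₂, -∂q/∂x₁) : q ∈ ℙ_{s+1}} and x·ℙ_{s-1} := {x ↦ p(x)·x : p ∈ ℙ_{s-1}}, where ℙ_{-1} = {0}. -/
/-!
Write `E` for the Euler operator `x₁∂₁ + x₂∂₂`, which multiplies homogeneous polynomials of
degree `k` by `k`. Then `div (rot⊥ q) = 0` and `div (p·x) = (E + 2) p`; as `E + 2` is invertible,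
the two summands meet only in `0`. Given `v ∈ (ℙ_s)²`, `p = (E + 2)⁻¹ div v ∈ ℙ_{s-1}` makes
`w = v - p·x` divergence free, and then `w = rot⊥ q` with `q = E⁻¹ (x₂w₁ - x₁w₂) ∈ ℙ_{s+1}`
(the argument has no constant term, on which `E⁻¹` is taken to be `0`): indeed
`∂₂ (x₂w₁ - x₁w₂) = (E + 1) w₁` and `∂₁ (x₂w₁ - x₁w₂) = -(E + 1) w₂` by `div w = 0`, while
`∂ᵢ E⁻¹ = (E + 1)⁻¹ ∂ᵢ`.
-/

open MvPolynomial

noncomputable section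

/-- Polynomials in two variables. -/
abbrev P2 := MvPolynomial (Fin 2) ℝ

/-- `ℙ_n`, polynomials of total degree ≤ n, with `ℙ_n = {0}` for `n < 0`. -/
def Pdeg2 (n : ℤ) : Submodule ℝ P2 :=
  if n < 0 then ⊥ else restrictTotalDegree (Fin 2) ℝ n.toNat

/-- `(ℙ_s)²` as a submodule of vector-valued polynomials. -/
def Ps2vec (s : ℕ) : Submodule ℝ (Fin 2 → P2) :=
  Submodule.pi Set.univ (fun _ => Pdeg2 s)

def pd2 (i : Fin 2) : P2 →ₗ[ℝ] P2 := (pderiv i : Derivation ℝ P2 P2).toLinearMap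

/-- `rot⊥ q = (∂q/∂x₂, -∂q/∂x₁)` as a linear map. -/
def rotPerpLM : P2 →ₗ[ℝ] (Fin 2 → P2) := LinearMap.pi ![pd2 1, -pd2 0]

/-- `p ↦ (x ↦ p(x)·x)` as a linear map. -/
def xMulLM : P2 →ₗ[ℝ] (Fin 2 → P2) :=
  LinearMap.pi (fun i => LinearMap.mulLeft ℝ (X i))

lemma Finsupp.degree_tsub_single_one_add_one {σ : Type*} {d : σ →₀ ℕ} {i : σ} (h : d i ≠ 0) :
    (d - Finsupp.single i 1).degree + 1 = d.degree := by
  have hle : Finsupp.single i 1 ≤ d := Finsupp.single_le_iff.mpr (Nat.one_le_iff_ne_zero.mpr h)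
  conv_rhs => rw [← tsub_add_cancel_of_le hle]
  rw [map_add, Finsupp.degree_single]

namespace MvPolynomial

variable {σ R : Type*} [CommSemiring R]

lemma map_mem_restrictSupport {s t : Set (σ →₀ ℕ)} (f : MvPolynomial σ R →ₗ[R] MvPolynomial σ R)
    (hf : ∀ d ∈ s, ∀ r, f (monomial d r) ∈ restrictSupport R t) {p : MvPolynomial σ R}
    (hp : p ∈ restrictSupport R s) : f p ∈ restrictSupport R t := by
  rw [p.as_sum, map_sum]
  exact Submodule.sum_mem _ fun d hd => hf d (hp hd) _

lemma pderiv_pderiv_comm (i j : σ) (p : MvPolynomial σ R) :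
    pderiv i (pderiv j p) = pderiv j (pderiv i p) := by
  induction p using induction_on' with
  | add p q hp hq => simp only [map_add, hp, hq]
  | monomial d r =>
    obtain rfl | hij := eq_or_ne i j
    · rfl
    simp only [pderiv_monomial, tsub_tsub, add_comm (Finsupp.single i 1), Finsupp.tsub_apply,
      Finsupp.single_eq_of_ne hij, Finsupp.single_eq_of_ne hij.symm, tsub_zero]
    ring_nf

def degreeScale (c : ℕ → R) : MvPolynomial σ R →ₗ[R] MvPolynomial σ R :=
  (basisMonomials σ R).constr R fun d => c d.degree • monomial d 1

@[simp]
lemma degreeScale_monomial (c : ℕ → R) (d : σ →₀ ℕ) (r : R) :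
    degreeScale c (monomial d r) = c d.degree • monomial d r := by
  rw [← mul_one r, ← smul_eq_mul, ← smul_monomial, map_smul, degreeScale,
    show monomial d 1 = basisMonomials σ R d from rfl, Module.Basis.constr_basis, smul_comm]
  rfl

lemma degreeScale_degreeScale_of_mul_eq_one {c c' : ℕ → R} (h : ∀ k, c k * c' k = 1)
    (p : MvPolynomial σ R) : degreeScale c (degreeScale c' p) = p := by
  induction p using induction_on' with
  | add p q hp hq => simp only [map_add, hp, hq]
  | monomial d r =>
    rw [degreeScale_monomial, map_smul, degreeScale_monomial, smul_smul, mul_comm, h, one_smul]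

lemma degreeScale_add_const (c : ℕ → R) (a : R) (p : MvPolynomial σ R) :
    degreeScale (fun k => c k + a) p = degreeScale c p + a • p := by
  induction p using induction_on' with
  | add p q hp hq => simp only [map_add, hp, hq, smul_add]; abel
  | monomial d r => simp only [degreeScale_monomial, add_smul]

lemma degreeScale_mem_restrictSupport (c : ℕ → R) {s : Set (σ →₀ ℕ)} {p : MvPolynomial σ R}
    (hp : p ∈ restrictSupport R s) : degreeScale c p ∈ restrictSupport R s :=
  map_mem_restrictSupport _ (fun d hd r => by
    rw [degreeScale_monomial]
    exact Submodule.smul_mem _ _ ((monomial_mem_restrictSupport R).mpr (.inl hd))) hp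

lemma pderiv_degreeScale (i : σ) (c : ℕ → R) (p : MvPolynomial σ R) :
    pderiv i (degreeScale c p) = degreeScale (fun k => c (k + 1)) (pderiv i p) := by
  induction p using induction_on' with
  | add p q hp hq => simp only [map_add, hp, hq]
  | monomial d r =>
    rw [degreeScale_monomial, Derivation.map_smul, pderiv_monomial, degreeScale_monomial]
    obtain hd | hd := eq_or_ne (d i) 0
    · simp [hd]
    · rw [Finsupp.degree_tsub_single_one_add_one hd]

variable [Fintype σ]

lemma sum_X_mul_pderiv_eq_degreeScale (p : MvPolynomial σ R) :
    ∑ i, X i * pderiv i p = degreeScale (fun k => (k : R)) p := by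
  induction p using induction_on' with
  | add p q hp hq => simp only [map_add, mul_add, Finset.sum_add_distrib, hp, hq]
  | monomial d r =>
    rw [(isHomogeneous_monomial r rfl).sum_X_mul_pderiv, degreeScale_monomial,
      Nat.cast_smul_eq_nsmul]

def divergence : (σ → MvPolynomial σ R) →ₗ[R] MvPolynomial σ R :=
  ∑ i, (pderiv i).toLinearMap ∘ₗ LinearMap.proj i

lemma divergence_apply (v : σ → MvPolynomial σ R) : divergence v = ∑ i, pderiv i (v i) := by
  simp [divergence]

lemma divergence_X_mul (p : MvPolynomial σ R) :
    divergence (fun i => X i * p) = degreeScale (fun k => (k : R) + Fintype.card σ) p := by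
  rw [divergence_apply, degreeScale_add_const, ← sum_X_mul_pderiv_eq_degreeScale]
  simp only [pderiv_mul, pderiv_X_self, one_mul, Finset.sum_add_distrib, Finset.sum_const,
    Finset.card_univ, Nat.cast_smul_eq_nsmul, add_comm]

end MvPolynomial

lemma Pdeg2_eq_restrictSupport (n : ℤ) :
    Pdeg2 n = restrictSupport ℝ {d | (d.degree : ℤ) ≤ n} := by
  unfold Pdeg2
  split_ifs with hn
  · have : {d : Fin 2 →₀ ℕ | (d.degree : ℤ) ≤ n} = ∅ :=
      Set.eq_empty_of_forall_notMem fun d (hd : (d.degree : ℤ) ≤ n) => by omega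
    rw [this, restrictSupport_eq_span, Set.image_empty, Submodule.span_empty]
  · rw [restrictTotalDegree]
    congr 1
    ext d
    change d.degree ≤ n.toNat ↔ (d.degree : ℤ) ≤ n
    omega

lemma mem_Pdeg2_of_monomial (f : P2 →ₗ[ℝ] P2) {m n : ℤ}
    (hf : ∀ d : Fin 2 →₀ ℕ, (d.degree : ℤ) ≤ m → ∀ r, f (monomial d r) ∈ Pdeg2 n) {p : P2}
    (hp : p ∈ Pdeg2 m) : f p ∈ Pdeg2 n := by
  rw [Pdeg2_eq_restrictSupport] at hp hf ⊢
  exact map_mem_restrictSupport f hf hp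

lemma monomial_mem_Pdeg2 {n : ℤ} {d : Fin 2 →₀ ℕ} (hd : (d.degree : ℤ) ≤ n) (r : ℝ) :
    monomial d r ∈ Pdeg2 n := by
  rw [Pdeg2_eq_restrictSupport]
  exact (monomial_mem_restrictSupport ℝ).mpr (.inl hd)

lemma pderiv_mem_Pdeg2 (i : Fin 2) {n : ℤ} {p : P2} (hp : p ∈ Pdeg2 n) :
    pderiv i p ∈ Pdeg2 (n - 1) :=
  mem_Pdeg2_of_monomial (pd2 i) (fun d hd r => by
    rw [pd2, Derivation.coeFn_coe, pderiv_monomial]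
    obtain hdi | hdi := eq_or_ne (d i) 0
    · simp [hdi]
    · refine monomial_mem_Pdeg2 ?_ _
      have := Finsupp.degree_tsub_single_one_add_one hdi
      omega) hp

lemma X_mul_mem_Pdeg2 (i : Fin 2) {n : ℤ} {p : P2} (hp : p ∈ Pdeg2 n) :
    X i * p ∈ Pdeg2 (n + 1) :=
  mem_Pdeg2_of_monomial (LinearMap.mulLeft ℝ (X i)) (fun d hd r => by
    rw [LinearMap.mulLeft_apply, X, monomial_mul, one_mul]
    refine monomial_mem_Pdeg2 ?_ _
    rw [map_add, Finsupp.degree_single]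
    omega) hp

lemma degreeScale_mem_Pdeg2 (c : ℕ → ℝ) {n : ℤ} {p : P2} (hp : p ∈ Pdeg2 n) :
    degreeScale c p ∈ Pdeg2 n := by
  rw [Pdeg2_eq_restrictSupport] at hp ⊢
  exact degreeScale_mem_restrictSupport c hp

lemma mem_Ps2vec_iff {s : ℕ} {v : Fin 2 → P2} : v ∈ Ps2vec s ↔ ∀ i, v i ∈ Pdeg2 s := by
  simp [Ps2vec, Submodule.mem_pi]

lemma rotPerpLM_apply_zero (q : P2) : rotPerpLM q 0 = pderiv 1 q := rfl

lemma rotPerpLM_apply_one (q : P2) : rotPerpLM q 1 = -pderiv 0 q := rfl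

lemma divergence_rotPerpLM (q : P2) : divergence (rotPerpLM q) = 0 := by
  rw [divergence_apply, Fin.sum_univ_two, rotPerpLM_apply_zero, rotPerpLM_apply_one, map_neg,
    pderiv_pderiv_comm, add_neg_cancel]

lemma divergence_xMulLM (p : P2) :
    divergence (xMulLM p) = degreeScale (fun k => (k : ℝ) + 2) p := by
  rw [show xMulLM p = fun i => X i * p from rfl, divergence_X_mul, Fintype.card_fin, Nat.cast_ofNat]

lemma disjoint_range_rotPerpLM_range_xMulLM :
    Disjoint (LinearMap.range rotPerpLM) (LinearMap.range xMulLM) := by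
  rw [Submodule.disjoint_def]
  rintro _ ⟨q, rfl⟩ ⟨p, hpq⟩
  have hp : degreeScale (fun k => (k : ℝ) + 2) p = 0 := by
    rw [← divergence_xMulLM, hpq, divergence_rotPerpLM]
  have hp0 : p = 0 := by
    rw [← degreeScale_degreeScale_of_mul_eq_one (c := fun k => ((k : ℝ) + 2)⁻¹)
      (fun k => inv_mul_cancel₀ (by positivity)) p, hp, map_zero]
  rw [← hpq, hp0, map_zero]

def streamFunction (w : Fin 2 → P2) : P2 :=
  degreeScale (fun k => (k : ℝ)⁻¹) (X 1 * w 0 - X 0 * w 1)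

lemma rotPerpLM_streamFunction {w : Fin 2 → P2} (hw : divergence w = 0) :
    rotPerpLM (streamFunction w) = w := by
  rw [divergence_apply, Fin.sum_univ_two] at hw
  have euler (i : Fin 2) : X 0 * pderiv 0 (w i) + X 1 * pderiv 1 (w i)
      = degreeScale (fun k => (k : ℝ)) (w i) := by
    rw [← sum_X_mul_pderiv_eq_degreeScale, Fin.sum_univ_two]
  have inv_succ (p : P2) :
      degreeScale (fun k => ((k + 1 : ℕ) : ℝ)⁻¹) (degreeScale (fun k => (k : ℝ) + 1) p) = p :=
    degreeScale_degreeScale_of_mul_eq_one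
      (fun k => by push_cast; exact inv_mul_cancel₀ (by positivity)) p
  ext1 i
  fin_cases i
  · rw [Fin.zero_eta, rotPerpLM_apply_zero, streamFunction, pderiv_degreeScale]
    convert inv_succ (w 0) using 2
    rw [degreeScale_add_const, one_smul, ← euler]
    simp only [map_sub, pderiv_mul, pderiv_X_self, pderiv_X_of_ne (by decide : (0 : Fin 2) ≠ 1)]
    linear_combination (-X 0 : P2) * hw
  · rw [Fin.mk_one, rotPerpLM_apply_one, streamFunction, pderiv_degreeScale, ← map_neg]
    convert inv_succ (w 1) using 2
    rw [degreeScale_add_const, one_smul, ← euler]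
    simp only [map_sub, pderiv_mul, pderiv_X_self, pderiv_X_of_ne (by decide : (1 : Fin 2) ≠ 0)]
    linear_combination (-X 1 : P2) * hw

lemma map_rotPerpLM_Pdeg2_le (s : ℕ) : (Pdeg2 (s + 1)).map rotPerpLM ≤ Ps2vec s := by
  rintro _ ⟨q, hq, rfl⟩
  have hq' (i : Fin 2) : pderiv i q ∈ Pdeg2 s := by simpa using pderiv_mem_Pdeg2 i hq
  rw [mem_Ps2vec_iff]
  intro i
  fin_cases i
  · exact hq' 1
  · exact neg_mem (hq' 0)

lemma map_xMulLM_Pdeg2_le (s : ℕ) : (Pdeg2 (s - 1)).map xMulLM ≤ Ps2vec s := by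
  rintro _ ⟨p, hp, rfl⟩
  rw [mem_Ps2vec_iff]
  intro i
  show X i * p ∈ _
  simpa using X_mul_mem_Pdeg2 i hp

lemma divergence_mem_Pdeg2 {s : ℕ} {v : Fin 2 → P2} (hv : v ∈ Ps2vec s) :
    divergence v ∈ Pdeg2 (s - 1) := by
  rw [divergence_apply]
  exact Submodule.sum_mem _ fun i _ => pderiv_mem_Pdeg2 i (mem_Ps2vec_iff.mp hv i)

lemma streamFunction_mem_Pdeg2 {s : ℕ} {w : Fin 2 → P2} (hw : w ∈ Ps2vec s) :
    streamFunction w ∈ Pdeg2 (s + 1) := by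
  rw [mem_Ps2vec_iff] at hw
  exact degreeScale_mem_Pdeg2 _ (sub_mem (X_mul_mem_Pdeg2 1 (hw 0)) (X_mul_mem_Pdeg2 0 (hw 1)))

lemma Ps2vec_le_sup (s : ℕ) :
    Ps2vec s ≤ (Pdeg2 (s + 1)).map rotPerpLM ⊔ (Pdeg2 (s - 1)).map xMulLM := by
  intro v hv
  set p := degreeScale (fun k => ((k : ℝ) + 2)⁻¹) (divergence v)
  have hp : p ∈ Pdeg2 (s - 1) := degreeScale_mem_Pdeg2 _ (divergence_mem_Pdeg2 hv)
  set w := v - xMulLM p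
  have hw : w ∈ Ps2vec s := sub_mem hv (map_xMulLM_Pdeg2_le s ⟨p, hp, rfl⟩)
  have hw_div : divergence w = 0 := by
    rw [map_sub, divergence_xMulLM, degreeScale_degreeScale_of_mul_eq_one
      (fun k => mul_inv_cancel₀ (by positivity)), sub_self]
  refine Submodule.mem_sup.mpr ⟨_, ⟨streamFunction w, streamFunction_mem_Pdeg2 hw, rfl⟩,
    _, ⟨p, hp, rfl⟩, ?_⟩
  rw [rotPerpLM_streamFunction hw_div, sub_add_cancel]

/-- `(ℙ_s)² = rot⊥(ℙ_{s+1}) ⊕ x·ℙ_{s-1}` (internal direct sum). -/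
theorem stmt2 (s : ℕ) :
    (Submodule.map rotPerpLM (Pdeg2 (s + 1))) ⊓ (Submodule.map xMulLM (Pdeg2 (s - 1))) = ⊥ ∧
    (Submodule.map rotPerpLM (Pdeg2 (s + 1))) ⊔ (Submodule.map xMulLM (Pdeg2 (s - 1))) =
      Ps2vec s :=
  ⟨disjoint_iff.mp (disjoint_range_rotPerpLM_range_xMulLM.mono
      LinearMap.map_le_range LinearMap.map_le_range),
    le_antisymm (sup_le (map_rotPerpLM_Pdeg2_le s) (map_xMulLM_Pdeg2_le s)) (Ps2vec_le_sup s)⟩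
end
end

section
/- For every integer s ≥ 0, the space (ℙ_s)³ decomposes as the direct sum of grad(ℙ_{s+1}) and {x ↦ x × p(x) : p ∈ (ℙ_{s-1})³}, where ℙ_{-1} = {0}. -/
/-!
Write `E = x · ∇` for the Euler operator; it multiplies the coefficient of `x^d` by `|d|`.
Since `x · (x × w) = 0`, a gradient `∇f = x × w` has `E f = x · ∇f = 0`, so `f` is constant and
`∇f = 0`. Conversely `∇(x · q) = q + E q + x × (∇ × q)` (product rule, `∇ × x = 0`), and `1 + E`,
scaling `x^d` by `1 + |d|`, is invertible on `(ℙ_s)³`: solving `q + E q = v` writes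
`v = ∇(x · q) + x × (-∇ × q)` with `x · q ∈ ℙ_{s+1}` and `∇ × q ∈ (ℙ_{s-1})³`.
-/

open MvPolynomial

noncomputable section

abbrev P3 := MvPolynomial (Fin 3) ℝ

/-- `ℙ_n`, polynomials of total degree ≤ n, with `ℙ_n = {0}` for `n < 0`. -/
def Pdeg3 (n : ℤ) : Submodule ℝ P3 :=
  if n < 0 then ⊥ else restrictTotalDegree (Fin 3) ℝ n.toNat

/-- `(ℙ_n)³`. -/
def Ps3vec (n : ℤ) : Submodule ℝ (Fin 3 → P3) :=
  Submodule.pi Set.univ (fun _ => Pdeg3 n)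

def pd3 (i : Fin 3) : P3 →ₗ[ℝ] P3 := (pderiv i : Derivation ℝ P3 P3).toLinearMap

def pr3 (i : Fin 3) : (Fin 3 → P3) →ₗ[ℝ] P3 := LinearMap.proj i

def grad3LM : P3 →ₗ[ℝ] (Fin 3 → P3) := LinearMap.pi ![pd3 0, pd3 1, pd3 2]

/-- `p ↦ (x ↦ x × p(x))` as a linear map on polynomial vector fields. -/
def crossXLM : (Fin 3 → P3) →ₗ[ℝ] (Fin 3 → P3) :=
  LinearMap.pi ![LinearMap.mulLeft ℝ (X 1) ∘ₗ pr3 2 - LinearMap.mulLeft ℝ (X 2) ∘ₗ pr3 1,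
                 LinearMap.mulLeft ℝ (X 2) ∘ₗ pr3 0 - LinearMap.mulLeft ℝ (X 0) ∘ₗ pr3 2,
                 LinearMap.mulLeft ℝ (X 0) ∘ₗ pr3 1 - LinearMap.mulLeft ℝ (X 1) ∘ₗ pr3 0]

namespace MvPolynomial

variable {σ R : Type*}

lemma add_single_mem_support_of_mem_support_pderiv [CommSemiring R] {p : MvPolynomial σ R}
    {d : σ →₀ ℕ} {i : σ} (hd : d ∈ (pderiv i p).support) :
    d + Finsupp.single i 1 ∈ p.support := by
  rw [mem_support_iff, coeff_pderiv] at hd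
  exact mem_support_iff.mpr (left_ne_zero_of_mul hd)

section Euler

variable [Fintype σ]

lemma coeff_sum_X_mul_pderiv [CommSemiring R] (p : MvPolynomial σ R) (d : σ →₀ ℕ) :
    coeff d (∑ i, X i * pderiv i p) = d.degree • coeff d p := by
  induction p using MvPolynomial.induction_on' with
  | monomial e r =>
    classical
    rw [(isHomogeneous_monomial r rfl).sum_X_mul_pderiv, coeff_smul, coeff_monomial]
    split_ifs with h
    · rw [h]
    · rw [smul_zero, smul_zero]
  | add p q hp hq =>
    simp only [map_add, mul_add, Finset.sum_add_distrib, coeff_add, hp, hq, smul_add]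

lemma eq_C_of_sum_X_mul_pderiv_eq_zero [CommSemiring R] [IsAddTorsionFree R]
    {p : MvPolynomial σ R} (h : ∑ i, X i * pderiv i p = 0) : p = C (coeff 0 p) := by
  classical
  ext d
  rw [coeff_C]
  split_ifs with hd
  · rw [hd]
  · have hdeg : d.degree ≠ 0 := fun h0 => hd ((Finsupp.degree_eq_zero_iff d).mp h0).symm
    have := coeff_sum_X_mul_pderiv p d
    rwa [h, coeff_zero, eq_comm, nsmul_eq_zero_iff_right hdeg] at this

lemma exists_support_subset_add_sum_X_mul_pderiv_eq [Field R] [CharZero R]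
    (p : MvPolynomial σ R) :
    ∃ q : MvPolynomial σ R, q.support ⊆ p.support ∧ q + ∑ i, X i * pderiv i q = p := by
  classical
  set q := ∑ d ∈ p.support, monomial d (((d.degree : R) + 1)⁻¹ * coeff d p)
  have hq : ∀ d, coeff d q = ((d.degree : R) + 1)⁻¹ * coeff d p := by
    intro d
    simp only [q, coeff_sum, coeff_monomial, Finset.sum_ite_eq']
    split_ifs with hd
    · rfl
    · rw [notMem_support_iff.mp hd, mul_zero]
  refine ⟨q, fun d hd => ?_, ?_⟩
  · rw [mem_support_iff, hq] at hd
    exact mem_support_iff.mpr (right_ne_zero_of_mul hd)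
  · ext d
    rw [coeff_add, coeff_sum_X_mul_pderiv, hq, nsmul_eq_mul]
    field_simp
    ring

end Euler

end MvPolynomial

lemma mem_Pdeg3 {n : ℤ} {p : P3} : p ∈ Pdeg3 n ↔ ∀ d ∈ p.support, (d.degree : ℤ) ≤ n := by
  unfold Pdeg3
  split_ifs with hn
  · rw [Submodule.mem_bot, ← support_eq_empty, Finset.eq_empty_iff_forall_notMem]
    exact forall_congr' fun d => ⟨fun h hd => absurd hd h, fun h hd => by have := h hd; omega⟩
  · rw [restrictTotalDegree, mem_restrictSupport_iff]
    exact forall₂_congr fun d _ => by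
      change d.degree ≤ n.toNat ↔ _
      omega

lemma mem_Ps3vec {n : ℤ} {v : Fin 3 → P3} : v ∈ Ps3vec n ↔ ∀ i, v i ∈ Pdeg3 n := by
  simp [Ps3vec, Submodule.mem_pi]

lemma pderiv_mem_Pdeg3 {n : ℤ} {p : P3} (i : Fin 3) (hp : p ∈ Pdeg3 (n + 1)) :
    pderiv i p ∈ Pdeg3 n := by
  rw [mem_Pdeg3] at hp ⊢
  intro d hd
  have := hp _ (add_single_mem_support_of_mem_support_pderiv hd)
  rw [map_add, Finsupp.degree_single] at this
  omega

lemma X_mul_mem_Pdeg3 {n : ℤ} {p : P3} (i : Fin 3) (hp : p ∈ Pdeg3 n) :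
    X i * p ∈ Pdeg3 (n + 1) := by
  rw [mem_Pdeg3] at hp ⊢
  intro d hd
  obtain ⟨e, he, rfl⟩ := Finset.mem_map.mp ((support_X_mul i p).subset hd)
  have := hp e he
  simp only [addLeftEmbedding_apply, map_add, Finsupp.degree_single]
  omega

lemma grad3LM_apply (f : P3) (i : Fin 3) : grad3LM f i = pderiv i f := by
  fin_cases i <;> rfl

lemma crossXLM_apply (w : Fin 3 → P3) :
    crossXLM w = ![X 1 * w 2 - X 2 * w 1, X 2 * w 0 - X 0 * w 2, X 0 * w 1 - X 1 * w 0] := by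
  funext i; fin_cases i <;> rfl

def curl (q : Fin 3 → P3) : Fin 3 → P3 :=
  ![pderiv 1 (q 2) - pderiv 2 (q 1), pderiv 2 (q 0) - pderiv 0 (q 2),
    pderiv 0 (q 1) - pderiv 1 (q 0)]

lemma sum_X_mul_crossXLM (w : Fin 3 → P3) : ∑ i, X i * crossXLM w i = 0 := by
  simp only [crossXLM_apply, Fin.sum_univ_three, Matrix.cons_val]
  ring

lemma grad3LM_sum_X_mul (q : Fin 3 → P3) :
    grad3LM (∑ i, X i * q i) = q + (fun j => ∑ i, X i * pderiv i (q j)) + crossXLM (curl q) := by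
  funext j
  fin_cases j <;>
    simp [grad3LM_apply, crossXLM_apply, curl, Fin.sum_univ_three, pderiv_X] <;>
    ring

lemma grad3LM_mem_Ps3vec {n : ℤ} {f : P3} (hf : f ∈ Pdeg3 (n + 1)) : grad3LM f ∈ Ps3vec n :=
  mem_Ps3vec.mpr fun i => grad3LM_apply f i ▸ pderiv_mem_Pdeg3 i hf

lemma crossXLM_mem_Ps3vec {n : ℤ} {w : Fin 3 → P3} (hw : w ∈ Ps3vec n) :
    crossXLM w ∈ Ps3vec (n + 1) := by
  rw [mem_Ps3vec] at hw ⊢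
  have h : ∀ a b : Fin 3, X a * w b ∈ Pdeg3 (n + 1) := fun a b => X_mul_mem_Pdeg3 a (hw b)
  intro i
  rw [crossXLM_apply]
  fin_cases i <;> exact Submodule.sub_mem _ (h _ _) (h _ _)

lemma curl_mem_Ps3vec {n : ℤ} {q : Fin 3 → P3} (hq : q ∈ Ps3vec (n + 1)) : curl q ∈ Ps3vec n := by
  rw [mem_Ps3vec] at hq ⊢
  have h : ∀ a b : Fin 3, pderiv a (q b) ∈ Pdeg3 n := fun a b => pderiv_mem_Pdeg3 a (hq b)
  intro i
  fin_cases i <;> exact Submodule.sub_mem _ (h _ _) (h _ _)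

lemma sum_X_mul_mem_Pdeg3 {n : ℤ} {q : Fin 3 → P3} (hq : q ∈ Ps3vec n) :
    ∑ i, X i * q i ∈ Pdeg3 (n + 1) :=
  Submodule.sum_mem _ fun i _ => X_mul_mem_Pdeg3 i (mem_Ps3vec.mp hq i)

lemma exists_mem_Ps3vec_add_sum_X_mul_pderiv_eq {n : ℤ} {v : Fin 3 → P3} (hv : v ∈ Ps3vec n) :
    ∃ q ∈ Ps3vec n, q + (fun j => ∑ i, X i * pderiv i (q j)) = v := by
  choose q hsupp hq using fun j => exists_support_subset_add_sum_X_mul_pderiv_eq (v j)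
  refine ⟨q, mem_Ps3vec.mpr fun j => ?_, funext hq⟩
  exact mem_Pdeg3.mpr fun d hd => mem_Pdeg3.mp (mem_Ps3vec.mp hv j) d (hsupp j hd)

/-- `(ℙ_s)³ = grad(ℙ_{s+1}) ⊕ {x ↦ x × p(x) : p ∈ (ℙ_{s-1})³}` (internal direct sum). -/
theorem stmt5 (s : ℕ) :
    (Submodule.map grad3LM (Pdeg3 (s + 1))) ⊓ (Submodule.map crossXLM (Ps3vec (s - 1))) = ⊥ ∧
    (Submodule.map grad3LM (Pdeg3 (s + 1))) ⊔ (Submodule.map crossXLM (Ps3vec (s - 1))) =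
      Ps3vec s := by
  refine ⟨eq_bot_iff.mpr ?_, le_antisymm (sup_le ?_ ?_) fun v hv => ?_⟩
  · rintro _ ⟨⟨f, -, rfl⟩, w, -, hw⟩
    have hf : f = C (coeff 0 f) := by
      refine eq_C_of_sum_X_mul_pderiv_eq_zero ?_
      simp_rw [← grad3LM_apply, ← hw, sum_X_mul_crossXLM]
    rw [Submodule.mem_bot, hf]
    funext i
    rw [grad3LM_apply, pderiv_C, Pi.zero_apply]
  · rintro _ ⟨f, hf, rfl⟩
    exact grad3LM_mem_Ps3vec hf
  · rintro _ ⟨w, hw, rfl⟩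
    simpa using crossXLM_mem_Ps3vec hw
  · obtain ⟨q, hq, rfl⟩ := exists_mem_Ps3vec_add_sum_X_mul_pderiv_eq hv
    refine Submodule.mem_sup.mpr ⟨_, ⟨_, sum_X_mul_mem_Pdeg3 hq, rfl⟩, crossXLM (-curl q),
      ⟨_, Submodule.neg_mem _ (curl_mem_Ps3vec (by simpa using hq)), rfl⟩, ?_⟩
    rw [grad3LM_sum_X_mul, map_neg, add_neg_cancel_right]
end
end
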